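/- arXiv:2109.13302 — 4 statements merged into one kernel-verified Lean document; each statement's English description precedes it below -/
import Mathlib

section
/- Let r > 0 and let D₁, D₂, D₃ be three pairwise disjoint closed disks in the plane, each of radius at least r. Then there is no point s in the plane such that dist(s, Dᵢ) ≤ (2/√3 − 1)·r for all i = 1, 2, 3. -/
/-!
If a point `s` is within `ε = (2/√3 - 1) r` of the disks `D(a, ρa)` and
`D(b, ρb)`, then `‖a - s‖ ≤ ρa + ε`, `‖b - s‖ ≤ ρb + ε` while `‖a - b‖ > ρa + ρb`, and by the law
of cosines the angle `∠ a s b` exceeds `2π/3`; the constant `2/√3` is exactly what makes this hold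
(with equality for three mutually tangent disks of radius `r` and `s` the centre of the triangle
of their centres). But three vectors cannot make pairwise angles greater than `2π/3`, since the
sum of their normalisations would have negative squared norm.
-/

open Metric Real

section InnerProduct

variable {F : Type*} [NormedAddCommGroup F] [InnerProductSpace ℝ F]

local notation "⟪" x ", " y "⟫" => @inner ℝ _ _ x y

theorem neg_three_halves_le_inner_add_inner_add_inner {u v w : F}
    (hu : ‖u‖ = 1) (hv : ‖v‖ = 1) (hw : ‖w‖ = 1) :
    -(3 / 2) ≤ ⟪u, v⟫ + ⟪u, w⟫ + ⟪v, w⟫ := by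
  have huvw := norm_add_sq_real (u + v) w
  have huv := norm_add_sq_real u v
  rw [inner_add_left, hw] at huvw
  rw [hu, hv] at huv
  nlinarith [sq_nonneg ‖u + v + w‖]

theorem inner_normalize_lt_neg_half {x y : F} (h : ⟪x, y⟫ < -(1 / 2) * (‖x‖ * ‖y‖)) :
    ⟪‖x‖⁻¹ • x, ‖y‖⁻¹ • y⟫ < -(1 / 2) := by
  have hx : 0 < ‖x‖ := norm_pos_iff.mpr (by rintro rfl; simp at h)
  have hy : 0 < ‖y‖ := norm_pos_iff.mpr (by rintro rfl; simp at h)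
  rw [real_inner_smul_left, real_inner_smul_right, ← mul_assoc, ← mul_inv,
    inv_mul_lt_iff₀ (mul_pos hx hy)]
  linarith

theorem not_pairwise_inner_lt_neg_half_mul_norm (u v w : F) :
    ¬ (⟪u, v⟫ < -(1 / 2) * (‖u‖ * ‖v‖) ∧ ⟪u, w⟫ < -(1 / 2) * (‖u‖ * ‖w‖) ∧
      ⟪v, w⟫ < -(1 / 2) * (‖v‖ * ‖w‖)) := by
  rintro ⟨huv, huw, hvw⟩
  have hu : u ≠ 0 := by rintro rfl; simp at huv
  have hv : v ≠ 0 := by rintro rfl; simp at huv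
  have hw : w ≠ 0 := by rintro rfl; simp at huw
  have hu₁ : ‖‖u‖⁻¹ • u‖ = 1 := norm_smul_inv_norm hu
  have hv₁ : ‖‖v‖⁻¹ • v‖ = 1 := norm_smul_inv_norm hv
  have hw₁ : ‖‖w‖⁻¹ • w‖ = 1 := norm_smul_inv_norm hw
  have := neg_three_halves_le_inner_add_inner_add_inner hu₁ hv₁ hw₁
  linarith [inner_normalize_lt_neg_half huv, inner_normalize_lt_neg_half huw,
    inner_normalize_lt_neg_half hvw]

theorem inner_lt_neg_half_mul_norm_of_norm_le {u v : F} {A B : ℝ} (hu : ‖u‖ ≤ A) (hv : ‖v‖ ≤ B)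
    (huv : A ^ 2 + A * B + B ^ 2 < ‖u - v‖ ^ 2) :
    ⟪u, v⟫ < -(1 / 2) * (‖u‖ * ‖v‖) := by
  rw [norm_sub_sq_real] at huv
  have hu₀ := norm_nonneg u
  have hv₀ := norm_nonneg v
  nlinarith [mul_le_mul hu hv hv₀ (hu₀.trans hu)]

end InnerProduct

theorem Metric.dist_le_infDist_closedBall_add {α : Type*} [PseudoMetricSpace α] (x c : α)
    {ρ : ℝ} (hρ : 0 ≤ ρ) : dist x c ≤ infDist x (closedBall c ρ) + ρ := by
  have hle : dist x c - ρ ≤ infDist x (closedBall c ρ) := by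
    rw [le_infDist ⟨c, mem_closedBall_self hρ⟩]
    intro y hy
    linarith [dist_triangle x y c, mem_closedBall.mp hy]
  linarith

theorem add_sq_add_mul_add_sq_le_of_le {r a b : ℝ} (hr : 0 ≤ r) (ha : r ≤ a) (hb : r ≤ b) :
    (a + (2 / √3 - 1) * r) ^ 2 + (a + (2 / √3 - 1) * r) * (b + (2 / √3 - 1) * r)
      + (b + (2 / √3 - 1) * r) ^ 2 ≤ (a + b) ^ 2 := by
  have ht : √3 ^ 2 = 3 := sq_sqrt (by norm_num)
  have ht₀ : 0 < √3 := by positivity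
  have ht₂ : √3 < 2 := by nlinarith
  have hinv : 2 / √3 = 2 * √3 / 3 := by field_simp; linarith
  have hdiff : (a + b) ^ 2 - ((a + (2 / √3 - 1) * r) ^ 2
      + (a + (2 / √3 - 1) * r) * (b + (2 / √3 - 1) * r) + (b + (2 / √3 - 1) * r) ^ 2)
      = (a - r) * (b - r) + (4 - 2 * √3) * r * ((a - r) + (b - r)) := by
    rw [hinv]
    linear_combination (-4 / 3 * r ^ 2) * ht
  have hpos : 0 ≤ (a - r) * (b - r) + (4 - 2 * √3) * r * ((a - r) + (b - r)) := by
    have : 0 ≤ 4 - 2 * √3 := by linarith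
    have := sub_nonneg.mpr ha
    have := sub_nonneg.mpr hb
    positivity
  linarith

theorem inner_sub_lt_neg_half_mul_norm_of_disjoint_closedBall {F : Type*}
    [NormedAddCommGroup F] [InnerProductSpace ℝ F] {r ρa ρb : ℝ} {a b s : F}
    (hr : 0 ≤ r) (ha : r ≤ ρa) (hb : r ≤ ρb)
    (hab : Disjoint (closedBall a ρa) (closedBall b ρb))
    (hsa : infDist s (closedBall a ρa) ≤ (2 / √3 - 1) * r)
    (hsb : infDist s (closedBall b ρb) ≤ (2 / √3 - 1) * r) :
    inner ℝ (a - s) (b - s) < -(1 / 2) * (‖a - s‖ * ‖b - s‖) := by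
  have hρa : 0 ≤ ρa := hr.trans ha
  have hρb : 0 ≤ ρb := hr.trans hb
  have hsep : ρa + ρb < ‖(a - s) - (b - s)‖ := by
    rw [sub_sub_sub_cancel_right, ← dist_eq_norm]
    exact (disjoint_closedBall_closedBall_iff hρa hρb).mp hab
  refine inner_lt_neg_half_mul_norm_of_norm_le (A := ρa + (2 / √3 - 1) * r)
    (B := ρb + (2 / √3 - 1) * r) ?_ ?_ ?_
  · rw [← dist_eq_norm, dist_comm]
    linarith [dist_le_infDist_closedBall_add s a hρa]
  · rw [← dist_eq_norm, dist_comm]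
    linarith [dist_le_infDist_closedBall_add s b hρb]
  · calc _ ≤ (ρa + ρb) ^ 2 := add_sq_add_mul_add_sq_le_of_le hr ha hb
      _ < _ := pow_lt_pow_left₀ hsep (by positivity) two_ne_zero

theorem stmt_0
    (r : ℝ) (hr : 0 < r)
    (c₁ c₂ c₃ : EuclideanSpace ℝ (Fin 2)) (ρ₁ ρ₂ ρ₃ : ℝ)
    (h₁ : r ≤ ρ₁) (h₂ : r ≤ ρ₂) (h₃ : r ≤ ρ₃)
    (h12 : Disjoint (closedBall c₁ ρ₁) (closedBall c₂ ρ₂))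
    (h13 : Disjoint (closedBall c₁ ρ₁) (closedBall c₃ ρ₃))
    (h23 : Disjoint (closedBall c₂ ρ₂) (closedBall c₃ ρ₃)) :
    ¬ ∃ s : EuclideanSpace ℝ (Fin 2),
      infDist s (closedBall c₁ ρ₁) ≤ (2 / Real.sqrt 3 - 1) * r ∧
      infDist s (closedBall c₂ ρ₂) ≤ (2 / Real.sqrt 3 - 1) * r ∧
      infDist s (closedBall c₃ ρ₃) ≤ (2 / Real.sqrt 3 - 1) * r := by
  rintro ⟨s, hs₁, hs₂, hs₃⟩
  exact not_pairwise_inner_lt_neg_half_mul_norm (c₁ - s) (c₂ - s) (c₃ - s)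
    ⟨inner_sub_lt_neg_half_mul_norm_of_disjoint_closedBall hr.le h₁ h₂ h12 hs₁ hs₂,
      inner_sub_lt_neg_half_mul_norm_of_disjoint_closedBall hr.le h₁ h₃ h13 hs₁ hs₃,
      inner_sub_lt_neg_half_mul_norm_of_disjoint_closedBall hr.le h₂ h₃ h23 hs₂ hs₃⟩
end

section
/- Let r > 0 and let x, y be points in the plane with ‖x − y‖ > 2r. If s is a point with ‖s − x‖ ≤ 2r/√3 and ‖s − y‖ ≤ 2r/√3, then the angle ∠xsy is strictly greater than 2π/3. -/
open Real

theorem stmt_1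
    (r : ℝ) (hr : 0 < r)
    (x y s : EuclideanSpace ℝ (Fin 2))
    (hxy : 2 * r < ‖x - y‖)
    (hsx : ‖s - x‖ ≤ 2 * r / Real.sqrt 3)
    (hsy : ‖s - y‖ ≤ 2 * r / Real.sqrt 3) :
    2 * π / 3 < EuclideanGeometry.angle x s y := by
  have h3 : (0:ℝ) < Real.sqrt 3 := by positivity
  have hsq : Real.sqrt 3 ^ 2 = 3 := Real.sq_sqrt (by norm_num)
  have hax : dist x s = ‖s - x‖ := by rw [dist_comm, dist_eq_norm]
  have hby : dist y s = ‖s - y‖ := by rw [dist_comm, dist_eq_norm]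
  have hcx : dist x y = ‖x - y‖ := dist_eq_norm x y
  have ha' : dist x s ≤ 2 * r / Real.sqrt 3 := hax ▸ hsx
  have hb' : dist y s ≤ 2 * r / Real.sqrt 3 := hby ▸ hsy
  have hc' : 2 * r < dist x y := hcx ▸ hxy
  have hlt : 2 * r / Real.sqrt 3 < 2 * r := by
    rw [div_lt_iff₀ h3]
    nlinarith [Real.sqrt_lt_sqrt (by norm_num : (0:ℝ) ≤ 1) (by norm_num : (1:ℝ) < 3),
      Real.sqrt_one]
  have ha0 : 0 < dist x s := by
    rcases (dist_nonneg : (0:ℝ) ≤ dist x s).eq_or_lt with h | h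
    · exfalso
      have hxs : x = s := by rwa [eq_comm, dist_eq_zero] at h
      rw [hxs] at hc'
      have : dist s y = dist y s := dist_comm s y
      linarith [hby ▸ hsy, dist_comm s y ▸ (hby ▸ hsy : dist y s ≤ 2 * r / Real.sqrt 3)]
    · exact h
  have hb0 : 0 < dist y s := by
    rcases (dist_nonneg : (0:ℝ) ≤ dist y s).eq_or_lt with h | h
    · exfalso
      have hys : y = s := by rwa [eq_comm, dist_eq_zero] at h
      rw [hys] at hc'
      have : dist x s ≤ 2 * r / Real.sqrt 3 := ha'
      linarith
    · exact h
  have hkey : dist x s * dist x s + dist y s * dist y s + dist x s * dist y s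
      < dist x y * dist x y := by
    have hsum : (2 * r / Real.sqrt 3) ^ 2 = 4 * r ^ 2 / 3 := by
      rw [div_pow, hsq]; ring
    nlinarith [(dist_nonneg : (0:ℝ) ≤ dist x s), (dist_nonneg : (0:ℝ) ≤ dist y s)]
  have hlaw := EuclideanGeometry.law_cos x s y
  have hcos : Real.cos (EuclideanGeometry.angle x s y) < -(1/2) := by
    nlinarith [mul_pos ha0 hb0]
  have hcos23 : Real.cos (2 * π / 3) = -(1/2) := by
    have h23 : (2:ℝ) * π / 3 = π - π / 3 := by ring
    rw [h23, Real.cos_pi_sub, Real.cos_pi_div_three]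
  have h1 : 2 * π / 3 ∈ Set.Icc (0:ℝ) π := by
    constructor <;> nlinarith [Real.pi_pos]
  have h2 : EuclideanGeometry.angle x s y ∈ Set.Icc (0:ℝ) π :=
    ⟨EuclideanGeometry.angle_nonneg _ _ _, EuclideanGeometry.angle_le_pi _ _ _⟩
  rw [← hcos23] at hcos
  exact (Real.strictAntiOn_cos.lt_iff_gt h2 h1).mp hcos
end

section
/- Let 𝒞 be a finite nonempty set of closed intervals on ℝ, let r ≥ 0, and let [α, β] be an interval in 𝒞 with minimal right endpoint. Let c' ∈ ℝ be any point with dist(c', [α, β]) ≤ r. Then every interval of 𝒞 that is within distance r of c' is also within distance r of the point c = β + r. (Hence placing a center at β + r is at least as good as any feasible center for the leftmost-ending interval.) -/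
/-!
For `r ≥ 0`, the point `x` is within `r` of `[a, b]` exactly when `x ∈ [a - r, b + r]`.
Since `c'` is within `r` of `[α, β]`, `c' ≤ β + r`; so any interval `I` within `r` of `c'`
has `I.1 ≤ c' + r ≤ β + 2r`, while `β ≤ I.2` by minimality of `β`. Both give
`β + r ∈ [I.1 - r, I.2 + r]`.
-/

open Metric

theorem Real.infDist_Icc {a b : ℝ} (hab : a ≤ b) (x : ℝ) :
    infDist x (Set.Icc a b) = max (a - x) (max (x - b) 0) := by
  refine le_antisymm ?_ ((le_infDist (Set.nonempty_Icc.2 hab)).2 fun y ⟨hay, hyb⟩ => ?_)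
  · calc infDist x (Set.Icc a b) ≤ dist x (Set.projIcc a b hab x) :=
          infDist_le_dist_of_mem (Set.projIcc a b hab x).2
      _ = max (a - x) (max (x - b) 0) := by
          rw [Set.coe_projIcc, Real.dist_eq]
          grind
  · rw [Real.dist_eq]
    exact max_le (by linarith [neg_abs_le (x - y)])
      (max_le (by linarith [le_abs_self (x - y)]) (abs_nonneg _))

theorem Real.infDist_Icc_le_iff {a b x r : ℝ} (hab : a ≤ b) :
    infDist x (Set.Icc a b) ≤ r ↔ 0 ≤ r ∧ a - r ≤ x ∧ x ≤ b + r := by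
  simp only [Real.infDist_Icc hab, max_le_iff]
  constructor <;> rintro ⟨h₁, h₂, h₃⟩ <;> refine ⟨?_, ?_, ?_⟩ <;> linarith

theorem stmt_13_general
    (𝒞 : Finset (ℝ × ℝ)) (hval : ∀ I ∈ 𝒞, I.1 ≤ I.2)
    (r : ℝ)
    (α β : ℝ) (hαβ : (α, β) ∈ 𝒞)
    (hmin : ∀ I ∈ 𝒞, β ≤ I.2)
    (c' : ℝ) (hc' : infDist c' (Set.Icc α β) ≤ r) :
    ∀ I ∈ 𝒞, infDist c' (Set.Icc I.1 I.2) ≤ r →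
      infDist (β + r) (Set.Icc I.1 I.2) ≤ r := by
  intro I hI hIc'
  rw [Real.infDist_Icc_le_iff (hval _ hαβ)] at hc'
  rw [Real.infDist_Icc_le_iff (hval I hI)] at hIc' ⊢
  exact ⟨hIc'.1, by linarith [hc'.2.2, hIc'.2.1], by linarith [hmin I hI]⟩

theorem stmt_13
    (𝒞 : Finset (ℝ × ℝ)) (h𝒞 : 𝒞.Nonempty) (hval : ∀ I ∈ 𝒞, I.1 ≤ I.2)
    (r : ℝ) (hr : 0 ≤ r)
    (α β : ℝ) (hαβ : (α, β) ∈ 𝒞)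
    (hmin : ∀ I ∈ 𝒞, β ≤ I.2)
    (c' : ℝ) (hc' : infDist c' (Set.Icc α β) ≤ r) :
    ∀ I ∈ 𝒞, infDist c' (Set.Icc I.1 I.2) ≤ r →
      infDist (β + r) (Set.Icc I.1 I.2) ≤ r :=
  stmt_13_general 𝒞 hval r α β hαβ hmin c' hc'
end

section
/- Let 𝒞 be a finite nonempty set of pairwise disjoint compact convex sets in the plane, let S be an optimal set of k centers with radius r_opt = max_{C∈𝒞} dist(C, S) > 0, and let s ∈ S be a center such that the set 𝒞' of members of 𝒞 intersecting B(s, r_opt) has exactly one element C. Then replacing s by any point of C yields a set of k points whose radius is at most r_opt. -/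
open Metric

theorem Finset.card_insert_erase_le {α : Type*} [DecidableEq α] {S : Finset α} {s : α}
    (hs : s ∈ S) (p : α) : (insert p (S.erase s)).card ≤ S.card :=
  (card_insert_le p _).trans (card_erase_add_one hs).le

theorem IsCompact.inter_closedBall_nonempty_of_infDist_le {α : Type*} [PseudoMetricSpace α]
    {D : Set α} (hD : IsCompact D) (hne : D.Nonempty) {x : α} {r : ℝ} (h : infDist x D ≤ r) :
    (closedBall x r ∩ D).Nonempty := by
  obtain ⟨d, hd, hxd⟩ := hD.exists_infDist_eq_dist hne x
  exact ⟨d, by rw [mem_closedBall, dist_comm, ← hxd]; exact h, hd⟩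

/-- Only the center `s` moves; a member that `s` served meets `closedBall s r` because a compact
set attains its distance, so it is `C`, which now contains the center `p`. -/
theorem exists_infDist_le_of_move_center {α : Type*} [PseudoMetricSpace α] [DecidableEq α]
    {𝒞 : Set (Set α)} (hcomp : ∀ D ∈ 𝒞, IsCompact D) (hne : ∀ D ∈ 𝒞, D.Nonempty)
    {S : Finset α} {r : ℝ} (hcov : ∀ D ∈ 𝒞, ∃ t ∈ S, infDist t D ≤ r)
    {s : α} {C : Set α} (huniq : ∀ D ∈ 𝒞, (closedBall s r ∩ D).Nonempty → D = C)
    {p : α} (hp : p ∈ C) :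
    ∀ D ∈ 𝒞, ∃ t ∈ insert p (S.erase s), infDist t D ≤ r := by
  intro D hD
  obtain ⟨t, htS, htD⟩ := hcov D hD
  by_cases hts : t = s
  · subst hts
    have hDC : D = C :=
      huniq D hD ((hcomp D hD).inter_closedBall_nonempty_of_infDist_le (hne D hD) htD)
    refine ⟨p, Finset.mem_insert_self _ _, ?_⟩
    rw [hDC, infDist_zero_of_mem hp]
    exact infDist_nonneg.trans htD
  · exact ⟨t, Finset.mem_insert_of_mem (Finset.mem_erase.mpr ⟨hts, htS⟩), htD⟩

open scoped Classical in
theorem stmt_17_general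
    (𝒞 : Finset (Set (EuclideanSpace ℝ (Fin 2))))
    (hcomp : ∀ C ∈ 𝒞, IsCompact C)
    (hne : ∀ C ∈ 𝒞, C.Nonempty)
    (S : Finset (EuclideanSpace ℝ (Fin 2))) (k : ℕ) (hcard : S.card = k)
    (ropt : ℝ)
    (hcov : ∀ C ∈ 𝒞, ∃ t ∈ S, infDist t C ≤ ropt)
    (s : EuclideanSpace ℝ (Fin 2)) (hs : s ∈ S)
    (C : Set (EuclideanSpace ℝ (Fin 2)))
    (huniq : ∀ D ∈ 𝒞, (closedBall s ropt ∩ D).Nonempty → D = C)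
    (p : EuclideanSpace ℝ (Fin 2)) (hp : p ∈ C) :
    (insert p (S.erase s)).card ≤ k ∧
    ∀ D ∈ 𝒞, ∃ t ∈ insert p (S.erase s), infDist t D ≤ ropt :=
  ⟨hcard ▸ Finset.card_insert_erase_le hs p,
    exists_infDist_le_of_move_center (𝒞 := ↑𝒞) hcomp hne hcov huniq hp⟩

open scoped Classical in
theorem stmt_17
    (𝒞 : Finset (Set (EuclideanSpace ℝ (Fin 2)))) (h𝒞 : 𝒞.Nonempty)
    (hcomp : ∀ C ∈ 𝒞, IsCompact C) (hconv : ∀ C ∈ 𝒞, Convex ℝ C)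
    (hne : ∀ C ∈ 𝒞, C.Nonempty)
    (hdisj : ∀ C ∈ 𝒞, ∀ D ∈ 𝒞, C ≠ D → Disjoint C D)
    (S : Finset (EuclideanSpace ℝ (Fin 2))) (k : ℕ) (hcard : S.card = k)
    (ropt : ℝ) (hpos : 0 < ropt)
    (hcov : ∀ C ∈ 𝒞, ∃ t ∈ S, infDist t C ≤ ropt)
    (s : EuclideanSpace ℝ (Fin 2)) (hs : s ∈ S)
    (C : Set (EuclideanSpace ℝ (Fin 2))) (hC : C ∈ 𝒞)
    (hint : (closedBall s ropt ∩ C).Nonempty)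
    (huniq : ∀ D ∈ 𝒞, (closedBall s ropt ∩ D).Nonempty → D = C)
    (p : EuclideanSpace ℝ (Fin 2)) (hp : p ∈ C) :
    (insert p (S.erase s)).card ≤ k ∧
    ∀ D ∈ 𝒞, ∃ t ∈ insert p (S.erase s), infDist t D ≤ ropt :=
  stmt_17_general 𝒞 hcomp hne S k hcard ropt hcov s hs C huniq p hp
end
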